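/- Let R be the rule set consisting of the two rules (1) Engine(x) → (∃v. IsIn(x,v) ∧ Bike(v)) ∨ Spare(x) and (2) Bike(x) → ∃w. Has(x,w) ∧ Engine(w), and let D = {Engine(d)}. Then the knowledge base ⟨R,D⟩ admits no finite chase tree; in particular, every chase tree of ⟨R,D⟩ is infinite and R never-terminates. -/

import Mathlib

set_option maxHeartbeats 1000000

namespace DisjChase

open scoped Classical
noncomputable section

/-! ### Basic syntax -/

abbrev Var := ℕ
abbrev Pred := ℕ

/-- An atom over a type of terms `T`. -/
structure Atom (T : Type) where
  pred : Pred
  args : List T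
deriving DecidableEq

def Atom.map {S T : Type} (f : S → T) (a : Atom S) : Atom T :=
  ⟨a.pred, a.args.map f⟩

/-- A (disjunctive existential) rule: a nonempty body and a nonempty list of
nonempty head conjunctions, all constant- and function-free (atoms over variables). -/
structure Rule where
  body : List (Atom Var)
  heads : List (List (Atom Var))
  body_ne : body ≠ []
  heads_ne : heads ≠ []
  heads_conj_ne : ∀ h ∈ heads, h ≠ []

def Rule.branching (ρ : Rule) : ℕ := ρ.heads.length

def Rule.bodyVars (ρ : Rule) : List Var := (ρ.body.map Atom.args).flatten

/-- The frontier of a rule: the body variables that also occur in some head disjunct. -/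
def Rule.frontierList (ρ : Rule) : List Var :=
  (ρ.bodyVars.filter fun x => ρ.heads.any fun h => h.any fun a => a.args.contains x).dedup

/-- A rule is datalog if it is deterministic and has no existentially quantified variables. -/
def Rule.Datalog (ρ : Rule) : Prop :=
  ρ.branching = 1 ∧ ∀ h ∈ ρ.heads, ∀ a ∈ h, ∀ x ∈ a.args, x ∈ ρ.bodyVars

/-- A rule is deterministic if it has exactly one head disjunct. -/
def Rule.Deterministic (ρ : Rule) : Prop := ρ.branching = 1

/-- Constants: the special constant `⋆`, ordinary constants, the fresh constants
`c_f` (one for each skolem function symbol `f = f^ρ_{i,y}`), and the fresh constants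
`c_x` (one for each variable `x`, used by `σ_uc`). -/
inductive Const where
  | star : Const
  | nat : ℕ → Const
  | skolemConst : Rule → ℕ → Var → Const
  | varConst : Var → Const

/-- Ground terms: built from constants and the skolem function symbols `f^ρ_{i,y}`. -/
inductive GTerm where
  | const : Const → GTerm
  | func : Rule → ℕ → Var → List GTerm → GTerm

def GTerm.isFunctional : GTerm → Prop
  | .const _ => False
  | .func _ _ _ _ => True

/-- `GTerm.Subterm s t` : `s` is a subterm of `t`. -/
inductive GTerm.Subterm : GTerm → GTerm → Prop
  | refl (t : GTerm) : GTerm.Subterm t t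
  | func {u s : GTerm} {args : List GTerm} (ρ : Rule) (i : ℕ) (y : Var) :
      s ∈ args → GTerm.Subterm u s → GTerm.Subterm u (GTerm.func ρ i y args)

def GTerm.depth : GTerm → ℕ
  | .const _ => 1
  | .func _ _ _ args => 1 + (args.attach.map fun t => GTerm.depth t.1).foldr max 0
termination_by t => sizeOf t
decreasing_by
  have := List.sizeOf_lt_of_mem t.2
  simp only [GTerm.func.sizeOf_spec]
  omega

/-- A term is cyclic if it has a subterm of the form `f(s⃗)` with `f` occurring in `s⃗`. -/
def GTerm.Cyclic (t : GTerm) : Prop :=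
  ∃ (ρ : Rule) (i : ℕ) (y : Var) (args : List GTerm),
    GTerm.Subterm (GTerm.func ρ i y args) t ∧
    ∃ s ∈ args, ∃ args' : List GTerm, GTerm.Subterm (GTerm.func ρ i y args') s

/-- A `ρ`-cyclic term: a term `f(s⃗)` with `f` a function symbol of `sk(ρ)`
occurring also in `s⃗`. -/
def RuleCyclic (ρ : Rule) (t : GTerm) : Prop :=
  ∃ (i : ℕ) (y : Var) (args : List GTerm), t = GTerm.func ρ i y args ∧
    ∃ s ∈ args, ∃ args' : List GTerm, GTerm.Subterm (GTerm.func ρ i y args') s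

/-! ### Substitutions, facts, triggers -/

abbrev Subst := Var → GTerm
abbrev Fact := Atom GTerm
abbrev FactSet := Set Fact

/-- The substitution mapping every variable `x` to the fresh constant `c_x`. -/
def sigmaUC : Subst := fun x => GTerm.const (Const.varConst x)

structure Trigger where
  rule : Rule
  subst : Subst

/-- The skolemizing substitution for disjunct `i`: body variables are mapped by `σ`,
existential variables `y` to the skolem term `f^ρ_{i,y}` applied to the frontier images. -/
def skolemSubst (ρ : Rule) (i : ℕ) (σ : Subst) : Subst := fun y =>
  if y ∈ ρ.bodyVars then σ y
  else GTerm.func ρ i y (ρ.frontierList.map σ)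

/-- `out_i(λ) = η_i(sk(ρ))σ` (0-indexed disjuncts). -/
def Trigger.out (lam : Trigger) (i : ℕ) : FactSet :=
  { f | ∃ a ∈ lam.rule.heads.getD i [], f = a.map (skolemSubst lam.rule i lam.subst) }

def Trigger.outUnion (lam : Trigger) : FactSet :=
  { f | ∃ i < lam.rule.branching, f ∈ lam.out i }

def Trigger.Loaded (lam : Trigger) (F : FactSet) : Prop :=
  ∀ a ∈ lam.rule.body, a.map lam.subst ∈ F

def Trigger.Obsolete (lam : Trigger) (F : FactSet) : Prop :=
  ∃ h ∈ lam.rule.heads, ∃ σ' : Subst,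
    (∀ x ∈ lam.rule.bodyVars, σ' x = lam.subst x) ∧ ∀ a ∈ h, a.map σ' ∈ F

/-- A fact set satisfies a rule if all triggers with this rule are not loaded or obsolete. -/
def SatisfiesRule (F : FactSet) (ρ : Rule) : Prop :=
  ∀ σ : Subst, Trigger.Loaded ⟨ρ, σ⟩ F → Trigger.Obsolete ⟨ρ, σ⟩ F

/-- A ground term is over a rule set if all its function symbols come from
the skolemization of the rule set. -/
inductive GTerm.Over (R : Set Rule) : GTerm → Prop
  | const (c : Const) : GTerm.Over R (GTerm.const c)
  | func {ρ : Rule} {i : ℕ} {y : Var} {args : List GTerm} :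
      ρ ∈ R → (∀ t ∈ args, GTerm.Over R t) → GTerm.Over R (GTerm.func ρ i y args)

def RTrigger (R : Set Rule) (lam : Trigger) : Prop :=
  lam.rule ∈ R ∧ ∀ x : Var, (lam.subst x).Over R

/-- A function-free fact set (i.e., a database). -/
def FunctionFree (F : FactSet) : Prop :=
  ∀ a ∈ F, ∀ t ∈ a.args, ∃ c : Const, t = GTerm.const c

/-! ### Chase trees -/

/-- Iterated edge relation: paths of length `k`. -/
def EPow {V : Type} (E : V → V → Prop) : ℕ → V → V → Prop
  | 0 => Eq
  | n + 1 => fun a c => ∃ b, E a b ∧ EPow E n b c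

/-- A chase tree for the knowledge base `⟨R, D⟩` (restricted chase with datalog priority). -/
structure ChaseTree (R : Set Rule) (D : FactSet) where
  V : Type
  E : V → V → Prop
  fl : V → FactSet
  tl : V → Trigger
  root : V
  reach_root : ∀ v, Relation.ReflTransGen E root v
  no_in_root : ∀ v, ¬ E v root
  parent_unique : ∀ {u w v : V}, E u v → E w v → u = w
  root_label : fl root = D
  expand : ∀ v : V, (∃ c, E v c) →
    ∃ lam : Trigger, RTrigger R lam ∧ lam.Loaded (fl v) ∧ ¬ lam.Obsolete (fl v) ∧
      (¬ lam.rule.Datalog → ∀ ρ ∈ R, ρ.Datalog → SatisfiesRule (fl v) ρ) ∧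
      ∃ f : Fin lam.rule.branching → V,
        Function.Injective f ∧ (∀ i, E v (f i)) ∧ (∀ c, E v c → ∃ i, c = f i) ∧
        ∀ i : Fin lam.rule.branching, fl (f i) = fl v ∪ lam.out i.1 ∧ tl (f i) = lam
  leaf_sat : ∀ v : V, (∀ c, ¬ E v c) → ∀ ρ ∈ R, SatisfiesRule (fl v) ρ
  fairness : ∀ lam : Trigger, RTrigger R lam → ∀ v : V, lam.Loaded (fl v) →
    ∃ k : ℕ, ∀ u : V, EPow E k v u → lam.Obsolete (fl u)

/-- A branch of a chase tree: a maximal path starting at the root. -/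
structure Branch {R : Set Rule} {D : FactSet} (T : ChaseTree R D) where
  seq : ℕ → Option T.V
  head : seq 0 = some T.root
  step_some : ∀ n v w, seq n = some v → seq (n + 1) = some w → T.E v w
  step_max : ∀ n v, seq n = some v → (∃ c, T.E v c) → ∃ w, seq (n + 1) = some w
  step_leaf : ∀ n v, seq n = some v → (∀ c, ¬ T.E v c) → seq (n + 1) = none
  step_none : ∀ n, seq n = none → seq (n + 1) = none

/-- The result of a chase tree: the unions of the fact labels along its branches. -/
def ChaseTree.result {R : Set Rule} {D : FactSet} (T : ChaseTree R D) : Set FactSet :=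
  { S | ∃ b : Branch T, S = { f | ∃ n v, b.seq n = some v ∧ f ∈ T.fl v } }

/-- A rule set never-terminates if some knowledge base with this rule set
admits no finite chase tree. -/
def NeverTerminates (R : Set Rule) : Prop :=
  ∃ D : FactSet, FunctionFree D ∧ ¬ ∃ T : ChaseTree R D, Finite T.V

/-! ### Head-choices and cyclicity sequences -/

/-- A head-choice maps every rule of `R` to one of its (1-indexed) disjuncts. -/
def IsHeadChoice (R : Set Rule) (hc : Rule → ℕ) : Prop :=
  ∀ ρ ∈ R, 1 ≤ hc ρ ∧ hc ρ ≤ ρ.branching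

def outHC (hc : Rule → ℕ) (lam : Trigger) : FactSet := lam.out (hc lam.rule - 1)

/-- `b` is the branch `branch(T,hc)` of `T`: every successive label is the parent's
label united with `out_hc` of the applied trigger. -/
def IsHcBranch {R : Set Rule} {D : FactSet} (T : ChaseTree R D) (hc : Rule → ℕ)
    (b : Branch T) : Prop :=
  ∀ n v w, b.seq n = some v → b.seq (n + 1) = some w →
    T.fl w = T.fl v ∪ outHC hc (T.tl w)

/-- `λ` is g-unblockable for `⟨R,D⟩` and `hc`. -/
def GUnblockable (R : Set Rule) (D : FactSet) (hc : Rule → ℕ) (lam : Trigger) : Prop :=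
  ∀ T : ChaseTree R D, ∀ b : Branch T, IsHcBranch T hc b →
    ∀ n v, b.seq n = some v → lam.Loaded (T.fl v) →
      ∃ m u, b.seq m = some u ∧ outHC hc lam ⊆ T.fl u

/-- `F_i(K, hc, Λ)` for a sequence `Λ` of triggers (0-indexed: `Λ k` is applied to `F_k`). -/
def chaseSeq (D : FactSet) (hc : Rule → ℕ) (Λ : ℕ → Trigger) : ℕ → FactSet
  | 0 => D
  | n + 1 => chaseSeq D hc Λ n ∪ outHC hc (Λ n)

def SeqLoaded (D : FactSet) (hc : Rule → ℕ) (Λ : ℕ → Trigger) : Prop :=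
  ∀ n, (Λ n).Loaded (chaseSeq D hc Λ n)

/-- `t` occurs in the fact set `F`. -/
def GTerm.OccursIn (t : GTerm) (F : FactSet) : Prop :=
  ∃ a ∈ F, ∃ s ∈ a.args, t.Subterm s

def SeqGrowing (D : FactSet) (hc : Rule → ℕ) (Λ : ℕ → Trigger) : Prop :=
  ∀ i, ∃ j, i < j ∧ ∃ t : GTerm,
    t.OccursIn (chaseSeq D hc Λ j) ∧ ¬ t.OccursIn (chaseSeq D hc Λ i)

/-- A cyclicity sequence: an (infinite) sequence of `R`-triggers that is loaded,
growing, and g-unblockable. -/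
def CyclicitySequence (R : Set Rule) (D : FactSet) (hc : Rule → ℕ) (Λ : ℕ → Trigger) : Prop :=
  (∀ n, RTrigger R (Λ n)) ∧ SeqLoaded D hc Λ ∧ SeqGrowing D hc Λ ∧
    ∀ n, GUnblockable R D hc (Λ n)

/-! ### Over-approximations and unblockability -/

/-- `F` is an over-approximation of `R` and `hc` before `λ`. -/
def IsOverApprox (R : Set Rule) (hc : Rule → ℕ) (lam : Trigger) (F : FactSet) : Prop :=
  ∃ h : GTerm → GTerm,
    (∀ x ∈ lam.rule.frontierList, h (lam.subst x) = lam.subst x) ∧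
    ∀ D : FactSet, FunctionFree D → ∀ T : ChaseTree R D, ∀ b : Branch T,
      IsHcBranch T hc b → ∀ n u, b.seq n = some u → ¬ outHC hc lam ⊆ T.fl u →
        (Atom.map h) '' (T.fl u) ⊆ F

/-- The substitution mapping the frontier of `ρ` (in order) to the given argument list. -/
def frontierSubst (ρ : Rule) (args : List GTerm) : Subst := fun x =>
  args.getD (ρ.frontierList.idxOf x) (GTerm.const Const.star)

/-- Birth facts of a term. -/
def GTerm.births : GTerm → FactSet
  | .const _ => ∅
  | .func ρ i _ args =>
      Trigger.out ⟨ρ, frontierSubst ρ args⟩ i ∪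
        (args.attach.map fun s => GTerm.births s.1).foldr (· ∪ ·) ∅
termination_by t => sizeOf t
decreasing_by
  have := List.sizeOf_lt_of_mem s.2
  simp only [GTerm.func.sizeOf_spec]
  omega

/-- Birth facts of a trigger. -/
def Trigger.births (lam : Trigger) : FactSet :=
  { f | ∃ x ∈ lam.rule.frontierList, f ∈ GTerm.births (lam.subst x) }

/-- The term-skeleton of a trigger: the terms occurring in its birth facts together
with the constants in frontier positions. -/
def skel (lam : Trigger) : Set GTerm :=
  { t | ∃ a ∈ lam.births, ∃ s ∈ a.args, t.Subterm s } ∪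
  { t | ∃ x ∈ lam.rule.frontierList, lam.subst x = t ∧ ∃ c, t = GTerm.const c }

/-- `h^⋆_λ`. -/
def hstar (lam : Trigger) : GTerm → GTerm := fun t =>
  if t ∈ skel lam then t else GTerm.const Const.star

/-- `h^uc_λ`. -/
def huc (lam : Trigger) : GTerm → GTerm := fun t =>
  if t ∈ skel lam then t
  else
    match t with
    | GTerm.func ρ i y _ => GTerm.const (Const.skolemConst ρ i y)
    | GTerm.const (Const.skolemConst ρ i y) => GTerm.const (Const.skolemConst ρ i y)
    | _ => GTerm.const Const.star

def hImg (h : GTerm → GTerm) (F : FactSet) : FactSet := (Atom.map h) '' F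

def predsOf (R : Set Rule) : Set Pred :=
  { p | ∃ ρ ∈ R, (∃ a ∈ ρ.body, a.pred = p) ∨ ∃ h ∈ ρ.heads, ∃ a ∈ h, a.pred = p }

def skelConsts (lam : Trigger) : Set Const :=
  { c | ∃ t ∈ skel lam, GTerm.Subterm (GTerm.const c) t }

/-- All facts over a predicate of `R` and constants from `skel(λ) ∪ {⋆}`. -/
def baseFacts (R : Set Rule) (lam : Trigger) : FactSet :=
  { a | a.pred ∈ predsOf R ∧
    ∀ t ∈ a.args, ∃ c : Const, t = GTerm.const c ∧ (c ∈ skelConsts lam ∨ c = Const.star) }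

def Oclosed (R : Set Rule) (hc : Rule → ℕ) (lam : Trigger) (h : GTerm → GTerm)
    (F : FactSet) : Prop :=
  baseFacts R lam ⊆ F ∧ lam.births ⊆ F ∧
  ∀ lam' : Trigger, RTrigger R lam' → lam'.Loaded F → outHC hc lam' ≠ outHC hc lam →
    hImg h (outHC hc lam') ⊆ F

/-- `O(R, hc, λ, h)`. -/
def Oset (R : Set Rule) (hc : Rule → ℕ) (lam : Trigger) (h : GTerm → GTerm) : FactSet :=
  ⋂₀ { F | Oclosed R hc lam h F }

def OclosedND (R : Set Rule) (lam : Trigger) (h : GTerm → GTerm) (F : FactSet) : Prop :=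
  baseFacts R lam ⊆ F ∧ lam.births ⊆ F ∧
  ∀ lam' : Trigger, RTrigger R lam' → lam'.Loaded F →
    (lam'.rule = lam.rule → ∃ i < lam.rule.branching, lam'.out i ≠ lam.out i) →
    hImg h lam'.outUnion ⊆ F

/-- `O(R, λ, h)`. -/
def OsetND (R : Set Rule) (lam : Trigger) (h : GTerm → GTerm) : FactSet :=
  ⋂₀ { F | OclosedND R lam h F }

/-- `λ` is `⋆`-unblockable for `R`. -/
def StarUnblockable (R : Set Rule) (lam : Trigger) : Prop :=
  lam.rule.Datalog ∨ ¬ lam.Obsolete (OsetND R lam (hstar lam))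

/-- `λ` is `uc`-unblockable for `R` and `hc`. -/
def UcUnblockable (R : Set Rule) (hc : Rule → ℕ) (lam : Trigger) : Prop :=
  lam.rule.Datalog ∨ ¬ lam.Obsolete (Oset R hc lam (huc lam))

/-! ### Constant mappings and reversibility -/

abbrev CMap := Const → Option GTerm

/-- Apply a constant mapping to a ground term, replacing constants in its domain. -/
def applyCM (g : CMap) : GTerm → GTerm
  | .const c => (g c).getD (GTerm.const c)
  | .func ρ i y args => GTerm.func ρ i y (args.attach.map fun s => applyCM g s.1)
termination_by t => sizeOf t
decreasing_by
  have := List.sizeOf_lt_of_mem s.2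
  simp only [GTerm.func.sizeOf_spec]
  omega

/-- `g` is reversible for the (subterm-closed) set of terms `𝒯`. -/
def Reversible (g : CMap) (𝒯 : Set GTerm) : Prop :=
  (∀ c : Const, GTerm.const c ∈ 𝒯 → (g c).isSome) ∧
  (∀ t ∈ 𝒯, ∀ s ∈ 𝒯, t ≠ s → applyCM g t ≠ applyCM g s) ∧
  (∀ c : Const, GTerm.const c ∈ 𝒯 →
    ∀ s : GTerm, s.Subterm (applyCM g (GTerm.const c)) →
      ∀ u ∈ 𝒯, u.isFunctional → applyCM g u ≠ s)

def cmImg (g : CMap) (F : FactSet) : FactSet := (Atom.map (applyCM g)) '' F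

/-! ### Cyclicity prefixes -/

/-- The rule-database `D_ρ = body(ρ)σ_uc`. -/
def ruleDB (ρ : Rule) : FactSet := { f | ∃ a ∈ ρ.body, f = a.map sigmaUC }

/-- A cyclicity prefix for `R`, `hc`, and `ρ ∈ R`. -/
structure CyclicityPrefix (R : Set Rule) (hc : Rule → ℕ) (ρ : Rule) where
  n : ℕ
  npos : 0 < n
  trig : ℕ → Trigger
  g : CMap
  rtrig : ∀ i ≤ n, RTrigger R (trig i)
  first_rule : (trig 0).rule = ρ
  first_subst : (trig 0).subst = sigmaUC
  loaded : ∀ i ≤ n, (trig i).Loaded (chaseSeq (ruleDB ρ) hc trig i)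
  uc_unbl : ∀ i, 1 ≤ i → i ≤ n → UcUnblockable R hc (trig i)
  g_unbl : GUnblockable R (ruleDB ρ) hc (trig 0)
  last_rule : (trig n).rule = ρ
  last_cyclic : ∃ t : GTerm, RuleCyclic ρ t ∧ t.OccursIn (outHC hc (trig n))
  g_comp : applyCM g ∘ (trig 0).subst = (trig n).subst
  g_rev : ∀ i, 1 ≤ i → i ≤ n → ∀ j : ℕ,
    Reversible g (skel ⟨(trig i).rule, (applyCM g)^[j] ∘ (trig i).subst⟩)

/-- The infinite sequence `Λ^∞` obtained by unfolding a cyclicity prefix. -/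
def prefixInf {R : Set Rule} {hc : Rule → ℕ} {ρ : Rule} (P : CyclicityPrefix R hc ρ) :
    ℕ → Trigger := fun k =>
  if k = 0 then P.trig 0
  else ⟨(P.trig ((k - 1) % P.n + 1)).rule,
        (applyCM P.g)^[(k - 1) / P.n] ∘ (P.trig ((k - 1) % P.n + 1)).subst⟩

/-! ### RPC, RPC_s, DRPC -/

def RPCclosed (R : Set Rule) (hc : Rule → ℕ) (ρ : Rule) (F : FactSet) : Prop :=
  ruleDB ρ ⊆ F ∧ outHC hc ⟨ρ, sigmaUC⟩ ⊆ F ∧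
  ∀ lam : Trigger, RTrigger R lam →
    (∀ x ∈ lam.rule.bodyVars, ¬ (lam.subst x).Cyclic) →
    lam.Loaded F → UcUnblockable R hc lam →
    (lam.rule = ρ → Set.InjOn lam.subst { x | x ∈ lam.rule.bodyVars }) →
    outHC hc lam ⊆ F

/-- `RPC(R, hc, ρ)`. -/
def RPCset (R : Set Rule) (hc : Rule → ℕ) (ρ : Rule) : FactSet :=
  ⋂₀ { F | RPCclosed R hc ρ F }

/-- `R` is restricted prefix-cyclic. -/
def IsRPC (R : Set Rule) : Prop :=
  ∃ hc : Rule → ℕ, IsHeadChoice R hc ∧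
    ∃ ρ ∈ R, ∃ t : GTerm, RuleCyclic ρ t ∧ t.OccursIn (RPCset R hc ρ)

/-- The head-choice `hc_i`. -/
def hcIdx (i : ℕ) : Rule → ℕ := fun ρ => if i ≤ ρ.branching then i else ρ.branching

/-- `branching(R)`: the least bound on the branching of the rules of `R`. -/
def branchingR (R : Set Rule) : ℕ := sInf { b | ∀ ρ ∈ R, ρ.branching ≤ b }

/-- `R` is `RPC_s`. -/
def IsRPCs (R : Set Rule) : Prop :=
  ∃ i : ℕ, 1 ≤ i ∧ i ≤ branchingR R ∧
    ∃ ρ ∈ R, ∃ t : GTerm, RuleCyclic ρ t ∧ t.OccursIn (RPCset R (hcIdx i) ρ)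

def DRPCclosed (R : Set Rule) (ρ : Rule) (F : FactSet) : Prop :=
  ruleDB ρ ⊆ F ∧ Trigger.out ⟨ρ, sigmaUC⟩ 0 ⊆ F ∧
  ∀ lam : Trigger, RTrigger R lam → lam.rule.Deterministic →
    (∀ x ∈ lam.rule.bodyVars, ¬ (lam.subst x).Cyclic) →
    lam.Loaded F → StarUnblockable R lam →
    (lam.rule = ρ → Set.InjOn lam.subst { x | x ∈ lam.rule.bodyVars }) →
    lam.out 0 ⊆ F

/-- `DRPC(R, ρ)`. -/
def DRPCset (R : Set Rule) (ρ : Rule) : FactSet :=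
  ⋂₀ { F | DRPCclosed R ρ F }

/-- `R` is deterministic restricted prefix-cyclic. -/
def IsDRPC (R : Set Rule) : Prop :=
  ∃ ρ ∈ R, ρ.Deterministic ∧ ∃ t : GTerm, RuleCyclic ρ t ∧ t.OccursIn (DRPCset R ρ)


/-! ### The concrete rules of Example 1 -/

def pEngine : Pred := 0
def pIsIn : Pred := 1
def pBike : Pred := 2
def pSpare : Pred := 3
def pHas : Pred := 4

-- variables: x = 0, v = 1, w = 2, y = 1 (in the datalog rules)

/-- Rule (1): `Engine(x) → (∃v. IsIn(x,v) ∧ Bike(v)) ∨ Spare(x)`. -/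
def ruleEngine : Rule where
  body := [⟨pEngine, [0]⟩]
  heads := [[⟨pIsIn, [0, 1]⟩, ⟨pBike, [1]⟩], [⟨pSpare, [0]⟩]]
  body_ne := by simp
  heads_ne := by simp
  heads_conj_ne := by simp

/-- Rule (2): `Bike(x) → ∃w. Has(x,w) ∧ Engine(w)`. -/
def ruleBike : Rule where
  body := [⟨pBike, [0]⟩]
  heads := [[⟨pHas, [0, 2]⟩, ⟨pEngine, [2]⟩]]
  body_ne := by simp
  heads_ne := by simp
  heads_conj_ne := by simp

/-- Rule (3): `IsIn(x,y) → Has(y,x)`. -/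
def ruleIsIn : Rule where
  body := [⟨pIsIn, [0, 1]⟩]
  heads := [[⟨pHas, [1, 0]⟩]]
  body_ne := by simp
  heads_ne := by simp
  heads_conj_ne := by simp

/-- Rule (4): `Has(x,y) → IsIn(y,x)`. -/
def ruleHas : Rule where
  body := [⟨pHas, [0, 1]⟩]
  heads := [[⟨pIsIn, [1, 0]⟩]]
  body_ne := by simp
  heads_ne := by simp
  heads_conj_ne := by simp

/-- The constant `d`. -/
def dConst : GTerm := GTerm.const (Const.nat 0)

/-- The database `D = {Engine(d)}`. -/
def exDB : FactSet := {⟨pEngine, [dConst]⟩}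

def R17 : Set Rule := {ruleEngine, ruleBike}

/-! ### Auxiliary development for the main theorem -/

def fE (t : GTerm) : GTerm := GTerm.func ruleEngine 0 1 [t]
def fB (t : GTerm) : GTerm := GTerm.func ruleBike 0 2 [t]

def aE (t : GTerm) : Fact := ⟨pEngine, [t]⟩
def aI (t s : GTerm) : Fact := ⟨pIsIn, [t, s]⟩
def aB (t : GTerm) : Fact := ⟨pBike, [t]⟩
def aS (t : GTerm) : Fact := ⟨pSpare, [t]⟩
def aH (t s : GTerm) : Fact := ⟨pHas, [t, s]⟩

lemma bvE : ruleEngine.bodyVars = [0] := rfl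
lemma bvB : ruleBike.bodyVars = [0] := rfl
lemma frontE : ruleEngine.frontierList = [0] := by decide
lemma frontB : ruleBike.frontierList = [0] := by decide

lemma skE0_0 (σ : Subst) : skolemSubst ruleEngine 0 σ 0 = σ 0 := by
  simp [skolemSubst, bvE]
lemma skE0_1 (σ : Subst) : skolemSubst ruleEngine 0 σ 1 = fE (σ 0) := by
  simp [skolemSubst, bvE, frontE, fE]
lemma skE1_0 (σ : Subst) : skolemSubst ruleEngine 1 σ 0 = σ 0 := by
  simp [skolemSubst, bvE]
lemma skB0_0 (σ : Subst) : skolemSubst ruleBike 0 σ 0 = σ 0 := by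
  simp [skolemSubst, bvB]
lemma skB0_2 (σ : Subst) : skolemSubst ruleBike 0 σ 2 = fB (σ 0) := by
  simp [skolemSubst, bvB, frontB, fB]

lemma mem_outE0 {σ : Subst} {f : Fact} :
    f ∈ Trigger.out ⟨ruleEngine, σ⟩ 0 ↔ f = aI (σ 0) (fE (σ 0)) ∨ f = aB (fE (σ 0)) := by
  simp only [Trigger.out, Set.mem_setOf_eq]
  constructor
  · rintro ⟨a, ha, rfl⟩
    have : a = (⟨pIsIn, [0, 1]⟩ : Atom Var) ∨ a = ⟨pBike, [1]⟩ := by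
      simpa [ruleEngine] using ha
    rcases this with rfl | rfl
    · left; simp [Atom.map, aI, skE0_0, skE0_1]
    · right; simp [Atom.map, aB, skE0_1]
  · rintro (rfl | rfl)
    · exact ⟨⟨pIsIn, [0, 1]⟩, by simp [ruleEngine],
        by simp [Atom.map, aI, skE0_0, skE0_1]⟩
    · exact ⟨⟨pBike, [1]⟩, by simp [ruleEngine], by simp [Atom.map, aB, skE0_1]⟩

lemma mem_outB0 {σ : Subst} {f : Fact} :
    f ∈ Trigger.out ⟨ruleBike, σ⟩ 0 ↔ f = aH (σ 0) (fB (σ 0)) ∨ f = aE (fB (σ 0)) := by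
  simp only [Trigger.out, Set.mem_setOf_eq]
  constructor
  · rintro ⟨a, ha, rfl⟩
    have : a = (⟨pHas, [0, 2]⟩ : Atom Var) ∨ a = ⟨pEngine, [2]⟩ := by
      simpa [ruleBike] using ha
    rcases this with rfl | rfl
    · left; simp [Atom.map, aH, skB0_0, skB0_2]
    · right; simp [Atom.map, aE, skB0_2]
  · rintro (rfl | rfl)
    · exact ⟨⟨pHas, [0, 2]⟩, by simp [ruleBike],
        by simp [Atom.map, aH, skB0_0, skB0_2]⟩
    · exact ⟨⟨pEngine, [2]⟩, by simp [ruleBike], by simp [Atom.map, aE, skB0_2]⟩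

lemma loadedE {σ : Subst} {F : FactSet} :
    Trigger.Loaded ⟨ruleEngine, σ⟩ F ↔ aE (σ 0) ∈ F := by
  simp [Trigger.Loaded, ruleEngine, Atom.map, aE]

lemma loadedB {σ : Subst} {F : FactSet} :
    Trigger.Loaded ⟨ruleBike, σ⟩ F ↔ aB (σ 0) ∈ F := by
  simp [Trigger.Loaded, ruleBike, Atom.map, aB]

/-- Obsoleteness of a `ruleEngine`-trigger, concretely. -/
def ObsE (t : GTerm) (F : FactSet) : Prop :=
  aS t ∈ F ∨ ∃ s, aI t s ∈ F ∧ aB s ∈ F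

/-- Obsoleteness of a `ruleBike`-trigger, concretely. -/
def ObsB (t : GTerm) (F : FactSet) : Prop :=
  ∃ s, aH t s ∈ F ∧ aE s ∈ F

lemma obsE_iff {σ : Subst} {F : FactSet} :
    Trigger.Obsolete ⟨ruleEngine, σ⟩ F ↔ ObsE (σ 0) F := by
  constructor
  · rintro ⟨h, hh, σ', hag, hall⟩
    have h0 : σ' 0 = σ 0 := hag 0 (by rw [bvE]; simp)
    have hcase : h = [(⟨pIsIn, [0, 1]⟩ : Atom Var), ⟨pBike, [1]⟩] ∨
        h = [⟨pSpare, [0]⟩] := by simpa [ruleEngine] using hh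
    rcases hcase with rfl | rfl
    · right
      refine ⟨σ' 1, ?_, ?_⟩
      · have := hall ⟨pIsIn, [0, 1]⟩ (by simp)
        simpa [Atom.map, aI, h0] using this
      · have := hall ⟨pBike, [1]⟩ (by simp)
        simpa [Atom.map, aB] using this
    · left
      have := hall ⟨pSpare, [0]⟩ (by simp)
      simpa [Atom.map, aS, h0] using this
  · rintro (hs | ⟨s, hi, hb⟩)
    · refine ⟨[⟨pSpare, [0]⟩], by simp [ruleEngine], σ, fun x _ => rfl, ?_⟩
      rintro a ha
      simp only [List.mem_singleton] at ha; subst ha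
      simpa [Atom.map, aS] using hs
    · refine ⟨[⟨pIsIn, [0, 1]⟩, ⟨pBike, [1]⟩], by simp [ruleEngine],
        (fun x => if x = 1 then s else σ x), ?_, ?_⟩
      · intro x hx; rw [bvE] at hx; simp only [List.mem_singleton] at hx
        subst hx; simp
      · rintro a ha
        simp only [List.mem_cons, List.mem_singleton, List.not_mem_nil, or_false] at ha
        rcases ha with rfl | rfl
        · simpa [Atom.map, aI] using hi
        · simpa [Atom.map, aB] using hb

lemma obsB_iff {σ : Subst} {F : FactSet} :
    Trigger.Obsolete ⟨ruleBike, σ⟩ F ↔ ObsB (σ 0) F := by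
  constructor
  · rintro ⟨h, hh, σ', hag, hall⟩
    have h0 : σ' 0 = σ 0 := hag 0 (by rw [bvB]; simp)
    have hcase : h = [(⟨pHas, [0, 2]⟩ : Atom Var), ⟨pEngine, [2]⟩] := by
      simpa [ruleBike] using hh
    subst hcase
    refine ⟨σ' 2, ?_, ?_⟩
    · have := hall ⟨pHas, [0, 2]⟩ (by simp)
      simpa [Atom.map, aH, h0] using this
    · have := hall ⟨pEngine, [2]⟩ (by simp)
      simpa [Atom.map, aE] using this
  · rintro ⟨s, hh, he⟩
    refine ⟨[⟨pHas, [0, 2]⟩, ⟨pEngine, [2]⟩], by simp [ruleBike],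
      (fun x => if x = 2 then s else σ x), ?_, ?_⟩
    · intro x hx; rw [bvB] at hx; simp only [List.mem_singleton] at hx
      subst hx; simp
    · rintro a ha
      simp only [List.mem_cons, List.mem_singleton, List.not_mem_nil, or_false] at ha
      rcases ha with rfl | rfl
      · simpa [Atom.map, aH] using hh
      · simpa [Atom.map, aE] using he

lemma fE_inj {a b : GTerm} (h : fE a = fE b) : a = b := by
  simpa [fE] using h

lemma fB_inj {a b : GTerm} (h : fB a = fB b) : a = b := by
  simpa [fB] using h

/-- The structural invariant maintained by all fact sets along the chosen branch. -/
def Good (F : FactSet) : Prop :=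
  (∀ u, aB u ∈ F → ∃ s, u = fE s ∧ aI s u ∈ F) ∧
  (∀ t s, aH t s ∈ F → aB t ∈ F) ∧
  (∀ t, aS t ∈ F → aE t ∈ F) ∧
  (∀ u, aE u ∈ F → (∃ c, u = GTerm.const c) ∨ ∃ s, u = fB s ∧ aH s u ∈ F) ∧
  (∀ t u, aI t u ∈ F → aE t ∈ F)

/-- A witness for non-satisfaction: a loaded, non-obsolete concrete trigger. -/
def Wit (F : FactSet) : Prop :=
  ∃ t, (aE t ∈ F ∧ ¬ ObsE t F) ∨ (aB t ∈ F ∧ ¬ ObsB t F)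

lemma good_exDB : Good exDB := by
  refine ⟨?_, ?_, ?_, ?_, ?_⟩
  · intro u hu; exfalso
    simp [exDB, aB, pBike, pEngine] at hu
  · intro t s h; exfalso
    simp [exDB, aH, pHas, pEngine] at h
  · intro t h; exfalso
    simp [exDB, aS, pSpare, pEngine] at h
  · intro u hu
    left
    have : u = dConst := by simpa [exDB, aE, pEngine] using hu
    exact ⟨Const.nat 0, by simp [this, dConst]⟩
  · intro t u h; exfalso
    simp [exDB, aI, pIsIn, pEngine] at h

lemma wit_exDB : Wit exDB := by
  refine ⟨dConst, Or.inl ⟨by simp [exDB, aE], ?_⟩⟩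
  rintro (hs | ⟨s, hi, _⟩)
  · simp [exDB, aS, pSpare, pEngine] at hs
  · simp [exDB, aI, pIsIn, pEngine] at hi

lemma goodE {F : FactSet} {σ : Subst} (hG : Good F) (hL : aE (σ 0) ∈ F) :
    Good (F ∪ Trigger.out ⟨ruleEngine, σ⟩ 0) := by
  obtain ⟨g1, g2, g3, g4, g5⟩ := hG
  refine ⟨?_, ?_, ?_, ?_, ?_⟩
  · intro u hu
    rw [Set.mem_union] at hu
    rcases hu with hu | hu
    · obtain ⟨s, rfl, hi⟩ := g1 u hu
      exact ⟨s, rfl, Set.mem_union_left _ hi⟩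
    · rw [mem_outE0] at hu
      rcases hu with h | h
    -- aB u = aI _ _ is impossible
      · exfalso; simp [aB, aI, pBike, pIsIn] at h
      · have : u = fE (σ 0) := by simpa [aB] using h
        subst this
        exact ⟨σ 0, rfl, Set.mem_union_right _ (mem_outE0.2 (Or.inl rfl))⟩
  · intro t s h
    rw [Set.mem_union] at h
    rcases h with h | h
    · exact Set.mem_union_left _ (g2 t s h)
    · exfalso
      rw [mem_outE0] at h
      rcases h with h | h
      · simp [aH, aI, pHas, pIsIn] at h
      · simp [aH, aB, pHas, pBike] at h
  · intro t h
    rw [Set.mem_union] at h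
    rcases h with h | h
    · exact Set.mem_union_left _ (g3 t h)
    · exfalso
      rw [mem_outE0] at h
      rcases h with h | h
      · simp [aS, aI, pSpare, pIsIn] at h
      · simp [aS, aB, pSpare, pBike] at h
  · intro u hu
    rw [Set.mem_union] at hu
    rcases hu with hu | hu
    · rcases g4 u hu with h | ⟨s, rfl, hh⟩
      · exact Or.inl h
      · exact Or.inr ⟨s, rfl, Set.mem_union_left _ hh⟩
    · exfalso
      rw [mem_outE0] at hu
      rcases hu with h | h
      · simp [aE, aI, pEngine, pIsIn] at h
      · simp [aE, aB, pEngine, pBike] at h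
  · intro t u h
    rw [Set.mem_union] at h
    rcases h with h | h
    · exact Set.mem_union_left _ (g5 t u h)
    · rw [mem_outE0] at h
      rcases h with h | h
      · have : t = σ 0 := by
          simp [aI] at h; exact h.1
        subst this
        exact Set.mem_union_left _ hL
      · exfalso; simp [aI, aB, pIsIn, pBike] at h

lemma goodB {F : FactSet} {σ : Subst} (hG : Good F) (hL : aB (σ 0) ∈ F) :
    Good (F ∪ Trigger.out ⟨ruleBike, σ⟩ 0) := by
  obtain ⟨g1, g2, g3, g4, g5⟩ := hG
  refine ⟨?_, ?_, ?_, ?_, ?_⟩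
  · intro u hu
    rw [Set.mem_union] at hu
    rcases hu with hu | hu
    · obtain ⟨s, rfl, hi⟩ := g1 u hu
      exact ⟨s, rfl, Set.mem_union_left _ hi⟩
    · exfalso
      rw [mem_outB0] at hu
      rcases hu with h | h
      · simp [aB, aH, pBike, pHas] at h
      · simp [aB, aE, pBike, pEngine] at h
  · intro t s h
    rw [Set.mem_union] at h
    rcases h with h | h
    · exact Set.mem_union_left _ (g2 t s h)
    · rw [mem_outB0] at h
      rcases h with h | h
      · have : t = σ 0 := by
          simp [aH] at h; exact h.1
        subst this
        exact Set.mem_union_left _ hL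
      · exfalso; simp [aH, aE, pHas, pEngine] at h
  · intro t h
    rw [Set.mem_union] at h
    rcases h with h | h
    · exact Set.mem_union_left _ (g3 t h)
    · exfalso
      rw [mem_outB0] at h
      rcases h with h | h
      · simp [aS, aH, pSpare, pHas] at h
      · simp [aS, aE, pSpare, pEngine] at h
  · intro u hu
    rw [Set.mem_union] at hu
    rcases hu with hu | hu
    · rcases g4 u hu with h | ⟨s, rfl, hh⟩
      · exact Or.inl h
      · exact Or.inr ⟨s, rfl, Set.mem_union_left _ hh⟩
    · rw [mem_outB0] at hu
      rcases hu with h | h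
      · exfalso; simp [aE, aH, pEngine, pHas] at h
      · have : u = fB (σ 0) := by simpa [aE] using h
        subst this
        exact Or.inr ⟨σ 0, rfl, Set.mem_union_right _ (mem_outB0.2 (Or.inl rfl))⟩
  · intro t u h
    rw [Set.mem_union] at h
    rcases h with h | h
    · exact Set.mem_union_left _ (g5 t u h)
    · exfalso
      rw [mem_outB0] at h
      rcases h with h | h
      · simp [aI, aH, pIsIn, pHas] at h
      · simp [aI, aE, pIsIn, pEngine] at h

/-- The key step: from a `Good` vertex with a witness we can move to a child
with the same properties. -/
lemma step (T : ChaseTree R17 exDB) (v : T.V)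
    (hG : Good (T.fl v)) (hW : Wit (T.fl v)) :
    ∃ c, T.E v c ∧ Good (T.fl c) ∧ Wit (T.fl c) := by
  have hne : ∃ c, T.E v c := by
    by_contra hno
    push_neg at hno
    obtain ⟨t, ht⟩ := hW
    rcases ht with ⟨hE, hnobs⟩ | ⟨hB, hnobs⟩
    · have hsat := T.leaf_sat v hno ruleEngine (by simp [R17])
      have hobs : Trigger.Obsolete ⟨ruleEngine, fun _ => t⟩ (T.fl v) :=
        hsat (fun _ => t) (loadedE.2 hE)
      exact hnobs (obsE_iff.1 hobs)
    · have hsat := T.leaf_sat v hno ruleBike (by simp [R17])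
      have hobs : Trigger.Obsolete ⟨ruleBike, fun _ => t⟩ (T.fl v) :=
        hsat (fun _ => t) (loadedB.2 hB)
      exact hnobs (obsB_iff.1 hobs)
  obtain ⟨lam, hrt, hload, hnobs, -, f, -, hEf, -, hfl⟩ := T.expand v hne
  obtain ⟨ρ, σ⟩ := lam
  have hρ : ρ = ruleEngine ∨ ρ = ruleBike := by
    simpa [R17] using hrt.1
  rcases hρ with rfl | rfl
  · -- the expansion trigger is a `ruleEngine` trigger
    have hb : (0 : ℕ) < Rule.branching ruleEngine := by
      simp [Rule.branching, ruleEngine]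
    obtain ⟨hfl0, -⟩ := hfl ⟨0, hb⟩
    have hfl0 : T.fl (f ⟨0, hb⟩) = T.fl v ∪ Trigger.out ⟨ruleEngine, σ⟩ 0 := hfl0
    have hEng : aE (σ 0) ∈ T.fl v := loadedE.1 hload
    have hnE : ¬ ObsE (σ 0) (T.fl v) := fun h => hnobs (obsE_iff.2 h)
    refine ⟨f ⟨0, hb⟩, hEf _, ?_, ?_⟩
    · rw [hfl0]; exact goodE ⟨hG.1, hG.2.1, hG.2.2.1, hG.2.2.2.1, hG.2.2.2.2⟩ hEng
    · rw [hfl0]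
      refine ⟨fE (σ 0), Or.inr
        ⟨Set.mem_union_right _ (mem_outE0.2 (Or.inr rfl)), ?_⟩⟩
      rintro ⟨s, hHas, -⟩
      rw [Set.mem_union] at hHas
      rcases hHas with hHas | hHas
      · have hBike : aB (fE (σ 0)) ∈ T.fl v := hG.2.1 _ _ hHas
        obtain ⟨s', heq, hIsIn⟩ := hG.1 _ hBike
        have hs' : s' = σ 0 := (fE_inj heq).symm
        subst hs'
        exact hnE (Or.inr ⟨fE (σ 0), hIsIn, hBike⟩)
      · rw [mem_outE0] at hHas
        rcases hHas with h | h
        · simp [aH, aI, pHas, pIsIn] at h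
        · simp [aH, aB, pHas, pBike] at h
  · -- the expansion trigger is a `ruleBike` trigger
    have hb : (0 : ℕ) < Rule.branching ruleBike := by
      simp [Rule.branching, ruleBike]
    obtain ⟨hfl0, -⟩ := hfl ⟨0, hb⟩
    have hfl0 : T.fl (f ⟨0, hb⟩) = T.fl v ∪ Trigger.out ⟨ruleBike, σ⟩ 0 := hfl0
    have hBik : aB (σ 0) ∈ T.fl v := loadedB.1 hload
    have hnB : ¬ ObsB (σ 0) (T.fl v) := fun h => hnobs (obsB_iff.2 h)
    refine ⟨f ⟨0, hb⟩, hEf _, ?_, ?_⟩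
    · rw [hfl0]; exact goodB ⟨hG.1, hG.2.1, hG.2.2.1, hG.2.2.2.1, hG.2.2.2.2⟩ hBik
    · rw [hfl0]
      have hEngF : aE (fB (σ 0)) ∈ T.fl v → False := by
        intro hEf'
        rcases hG.2.2.2.1 _ hEf' with ⟨c, hc⟩ | ⟨s, heq, hh⟩
        · simp [fB] at hc
        · have hs : s = σ 0 := fB_inj heq.symm
          subst hs
          exact hnB ⟨fB (σ 0), hh, hEf'⟩
      refine ⟨fB (σ 0), Or.inl
        ⟨Set.mem_union_right _ (mem_outB0.2 (Or.inr rfl)), ?_⟩⟩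
      rintro (hs | ⟨s, hi, -⟩)
      · rw [Set.mem_union] at hs
        rcases hs with hs | hs
        · exact hEngF (hG.2.2.1 _ hs)
        · rw [mem_outB0] at hs
          rcases hs with h | h
          · simp [aS, aH, pSpare, pHas] at h
          · simp [aS, aE, pSpare, pEngine] at h
      · rw [Set.mem_union] at hi
        rcases hi with hi | hi
        · exact hEngF (hG.2.2.2.2 _ _ hi)
        · rw [mem_outB0] at hi
          rcases hi with h | h
          · simp [aI, aH, pIsIn, pHas] at h
          · simp [aI, aE, pIsIn, pEngine] at h

lemma epow_succ {V : Type} (E : V → V → Prop) :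
    ∀ (n : ℕ) (a c : V), EPow E (n + 1) a c ↔ ∃ b, EPow E n a b ∧ E b c := by
  intro n
  induction n with
  | zero =>
    intro a c
    constructor
    · rintro ⟨b, hab, hbc⟩
      cases hbc
      exact ⟨a, rfl, hab⟩
    · rintro ⟨b, hab, hbc⟩
      cases hab
      exact ⟨c, hbc, rfl⟩
  | succ n ih =>
    intro a c
    constructor
    · rintro ⟨b, hab, h⟩
      obtain ⟨m, h1, h2⟩ := (ih b c).1 h
      exact ⟨m, ⟨b, hab, h1⟩, h2⟩
    · rintro ⟨m, ⟨b, hab, h1⟩, h2⟩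
      exact ⟨b, hab, (ih b c).2 ⟨m, h1, h2⟩⟩

lemma depth_unique (T : ChaseTree R17 exDB) :
    ∀ (n m : ℕ) (v : T.V), EPow T.E n T.root v → EPow T.E m T.root v → n = m := by
  intro n
  induction n with
  | zero =>
    intro m v h1 h2
    cases h1
    cases m with
    | zero => rfl
    | succ m =>
      obtain ⟨b, -, hb⟩ := (epow_succ T.E m T.root T.root).1 h2
      exact absurd hb (T.no_in_root b)
  | succ n ih =>
    intro m v h1 h2
    obtain ⟨b, hb, hbv⟩ := (epow_succ T.E n T.root v).1 h1
    cases m with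
    | zero =>
      cases h2
      exact absurd hbv (T.no_in_root b)
    | succ m =>
      obtain ⟨b', hb', hb'v⟩ := (epow_succ T.E m T.root v).1 h2
      have : b = b' := T.parent_unique hbv hb'v
      subst this
      rw [ih m b hb hb']

noncomputable def chain (T : ChaseTree R17 exDB) :
    ℕ → {v : T.V // Good (T.fl v) ∧ Wit (T.fl v)}
  | 0 => ⟨T.root, by rw [T.root_label]; exact ⟨good_exDB, wit_exDB⟩⟩
  | n + 1 =>
    ⟨(step T (chain T n).1 (chain T n).2.1 (chain T n).2.2).choose,
     (step T (chain T n).1 (chain T n).2.1 (chain T n).2.2).choose_spec.2⟩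

lemma chain_edge (T : ChaseTree R17 exDB) (n : ℕ) :
    T.E (chain T n).1 (chain T (n + 1)).1 :=
  (step T (chain T n).1 (chain T n).2.1 (chain T n).2.2).choose_spec.1

lemma chain_epow (T : ChaseTree R17 exDB) : ∀ n, EPow T.E n T.root (chain T n).1
  | 0 => rfl
  | n + 1 => (epow_succ T.E n T.root _).2 ⟨(chain T n).1, chain_epow T n, chain_edge T n⟩

lemma no_finite_chase (T : ChaseTree R17 exDB) : ¬ Finite T.V := by
  intro hfin
  haveI := hfin
  obtain ⟨n, m, hne, he⟩ :=
    Finite.exists_ne_map_eq_of_infinite (fun n : ℕ => (chain T n).1)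
  exact hne (depth_unique T n m _ (chain_epow T n) (he ▸ chain_epow T m))

/-- The knowledge base `⟨{(1),(2)}, {Engine(d)}⟩` admits no finite chase tree;
in particular, every chase tree of it is infinite and the rule set never-terminates. -/
theorem example_never_terminates :
    (¬ ∃ T : ChaseTree R17 exDB, Finite T.V) ∧
    (∀ T : ChaseTree R17 exDB, ¬ Finite T.V) ∧
    NeverTerminates R17 := by
  refine ⟨?_, no_finite_chase, exDB, ?_, ?_⟩
  · rintro ⟨T, h⟩; exact no_finite_chase T h
  · intro a ha t ht
    have : a = (⟨pEngine, [dConst]⟩ : Fact) := by simpa [exDB] using ha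
    subst this
    simp only [List.mem_singleton] at ht
    subst ht
    exact ⟨Const.nat 0, rfl⟩
  · rintro ⟨T, h⟩; exact no_finite_chase T h

end
end DisjChase
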